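/- arXiv:math/0608415 — 4 statements merged into one kernel-verified Lean document; each statement's English description precedes it below -/
import Mathlib

section
/- Let f be a quadratic form with rational coefficients in n+1 variables of signature (n,1), and let B(x,y) = (f(x+y) − f(x) − f(y))/2 be its polar bilinear form. Let e_0, e_1, ..., e_k ∈ ℤ^{n+1} be primitive integer vectors with f(e_i) > 0 for all i, and suppose that B(e_i, e_0)^2 ≥ f(e_i)·f(e_0) for i = 1, ..., k. Then there exists an integer N ≥ 1 such that for every matrix γ ∈ O(f,ℤ) that is congruent to the identity matrix modulo N, either γ·e_0 = e_0 or γ·e_0 = −e_0, or else for every i ∈ {0, 1, ..., k} one has γ·e_0 ∉ {e_i, −e_i} and B(γ·e_0, e_i)^2 ≥ f(e_0)·f(e_i). -/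
/-!
Clearing denominators gives an integer `d ≠ 0` with `d • B(u, w) ∈ ℤ` for all integer vectors
`u, w`. If `γ ≡ 1 (mod N)` then `γ e₀ ≡ e₀ (mod N)`, so `d • B(γ e₀, eᵢ) ≡ d • B(e₀, eᵢ) (mod N)`.
Once `N > 2 |d| |B(e₀, eᵢ)|`, this congruence rules out `|B(γ e₀, eᵢ)| < |B(e₀, eᵢ)|`, whence
`B(γ e₀, eᵢ)² ≥ B(e₀, eᵢ)² ≥ f(e₀) f(eᵢ)`. Once `N` also exceeds `|eᵢ| + |e₀|` coordinatewise,
`γ e₀ = ±eᵢ` together with `γ e₀ ≡ e₀ (mod N)` forces `γ e₀ = e₀`.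
-/

namespace Paper

open Matrix

/-- Value at `x` of the quadratic form with Gram matrix `Q`. -/
def qeval {m : ℕ} {R : Type*} [CommRing R] (Q : Matrix (Fin m) (Fin m) R) (x : Fin m → R) : R :=
  x ⬝ᵥ (Q *ᵥ x)

/-- The polar bilinear form `B(x,y) = (f(x+y) - f(x) - f(y))/2` of the quadratic form
with Gram matrix `Q`. -/
def qpolar {m : ℕ} {K : Type*} [Field K] (Q : Matrix (Fin m) (Fin m) K) (x y : Fin m → K) : K :=
  (qeval Q (x + y) - qeval Q x - qeval Q y) / 2

/-- A real quadratic form (given by its Gram matrix `Q`) has signature `(r,s)`: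
`r + s = m` and it is linearly equivalent over `ℝ` to
`x_1^2 + ... + x_r^2 - x_{r+1}^2 - ... - x_m^2`. -/
def RealSignature {m : ℕ} (Q : Matrix (Fin m) (Fin m) ℝ) (r s : ℕ) : Prop :=
  r + s = m ∧ ∃ T : Matrix (Fin m) (Fin m) ℝ, T.det ≠ 0 ∧
    ∀ x : Fin m → ℝ, qeval Q (T *ᵥ x) = ∑ i : Fin m, (if (i : ℕ) < r then (x i)^2 else -(x i)^2)

/-- A rational quadratic form has signature `(r,s)` if it does as a real quadratic form. -/
def HasSignature {m : ℕ} (Q : Matrix (Fin m) (Fin m) ℚ) (r s : ℕ) : Prop :=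
  RealSignature (Q.map (Rat.cast : ℚ → ℝ)) r s

/-- The rational quadratic form `F` (in `n` variables) represents the rational quadratic
form `G` (in `k` variables): after a linear change of coordinates over `ℚ`,
`F(x_1,...,x_n) = G(x_1,...,x_k) + H(x_{k+1},...,x_n)` for some rational quadratic form `H`. -/
def Represents {n k : ℕ} (F : Matrix (Fin n) (Fin n) ℚ) (G : Matrix (Fin k) (Fin k) ℚ) : Prop :=
  ∃ (m : ℕ) (hm : n = k + m) (H : Matrix (Fin m) (Fin m) ℚ) (T : Matrix (Fin n) (Fin n) ℚ),
    T.det ≠ 0 ∧ ∀ (x : Fin k → ℚ) (y : Fin m → ℚ),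
      qeval F (T *ᵥ (Fin.append x y ∘ Fin.cast hm)) = qeval G x + qeval H y

/-- The group `O(f, A)` of matrices in `GL(m, A)` preserving the quadratic form `f`
(with Gram matrix `Q` over `K ⊇ A`): those `M` with `f(Mx) = f(x)` for all `x`. -/
def ortho {m : ℕ} (A : Type*) [CommRing A] {K : Type*} [Field K] [Algebra A K]
    (Q : Matrix (Fin m) (Fin m) K) : Subgroup (GL (Fin m) A) where
  carrier := { M | ∀ x : Fin m → K,
      qeval Q (((M : Matrix (Fin m) (Fin m) A).map (algebraMap A K)) *ᵥ x) = qeval Q x }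
  one_mem' := by
    intro x
    have h1 : ((1 : GL (Fin m) A) : Matrix (Fin m) (Fin m) A).map (algebraMap A K) = 1 := by
      simp [Matrix.map_one]
    rw [h1, Matrix.one_mulVec]
  mul_mem' := by
    intro a b ha hb x
    have h : ((a * b : GL (Fin m) A) : Matrix (Fin m) (Fin m) A).map (algebraMap A K)
        = ((a : Matrix (Fin m) (Fin m) A).map (algebraMap A K)) *
          ((b : Matrix (Fin m) (Fin m) A).map (algebraMap A K)) := by
      rw [Units.val_mul, Matrix.map_mul]
    rw [h, ← Matrix.mulVec_mulVec, ha, hb]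
  inv_mem' := by
    intro a ha x
    set M := ((a : Matrix (Fin m) (Fin m) A).map (algebraMap A K)) with hM
    set N := (((a⁻¹ : GL (Fin m) A) : Matrix (Fin m) (Fin m) A).map (algebraMap A K)) with hN
    have hMN : M * N = 1 := by
      rw [hM, hN, ← Matrix.map_mul]
      have : (a : Matrix (Fin m) (Fin m) A) * ((a⁻¹ : GL (Fin m) A) : Matrix (Fin m) (Fin m) A)
          = 1 := a.mul_inv
      rw [this]
      simp [Matrix.map_one]
    have ha' : ∀ y : Fin m → K, qeval Q (M *ᵥ y) = qeval Q y := ha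
    calc qeval Q (N *ᵥ x) = qeval Q (M *ᵥ (N *ᵥ x)) := (ha' (N *ᵥ x)).symm
      _ = qeval Q ((M * N) *ᵥ x) := by rw [Matrix.mulVec_mulVec]
      _ = qeval Q x := by rw [hMN, Matrix.one_mulVec]

/-- `O(f, ℤ)` for a rational quadratic form `f` with Gram matrix `Q`. -/
abbrev OZ {m : ℕ} (Q : Matrix (Fin m) (Fin m) ℚ) : Subgroup (GL (Fin m) ℤ) := ortho ℤ Q

/-- A group is finitely presented: it is a quotient of a finitely generated free group by
the normal closure of a finite set of relators. -/
def IsFinitelyPresented (G : Type*) [Group G] : Prop :=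
  ∃ (n : ℕ) (rels : Set (FreeGroup (Fin n))), rels.Finite ∧ Nonempty (PresentedGroup rels ≃* G)

/-- A group is coherent if each of its finitely generated subgroups is finitely presented. -/
def IsCoherent (G : Type*) [Group G] : Prop :=
  ∀ H : Subgroup G, Group.FG H → IsFinitelyPresented H

/-- Two groups are abstractly commensurable if they contain isomorphic
subgroups of finite index. -/
def AbstractlyCommensurable (G H : Type*) [Group G] [Group H] : Prop :=
  ∃ (G' : Subgroup G) (H' : Subgroup H), G'.FiniteIndex ∧ H'.FiniteIndex ∧ Nonempty (G' ≃* H')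

/-- The form `q₃ = -x₀² + x₁² + x₂² + x₃²`. -/
def q3 : Matrix (Fin 4) (Fin 4) ℚ := Matrix.diagonal ![-1, 1, 1, 1]

/-- An integer vector is primitive if the gcd of its coordinates is `1`. -/
def IsPrimitiveVec {m : ℕ} (v : Fin m → ℤ) : Prop := Finset.univ.gcd v = 1

/-- The image in `ℚ^m` of an integer vector. -/
def intVecCast {m : ℕ} (v : Fin m → ℤ) : Fin m → ℚ := fun j => (v j : ℚ)

section Polar

variable {m : ℕ} {K : Type*} [Field K] (Q : Matrix (Fin m) (Fin m) K)

theorem qpolar_eq (x y : Fin m → K) : qpolar Q x y = (x ⬝ᵥ Q *ᵥ y + y ⬝ᵥ Q *ᵥ x) / 2 := by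
  simp only [qpolar, qeval, mulVec_add, dotProduct_add, add_dotProduct]
  ring

theorem qpolar_comm (x y : Fin m → K) : qpolar Q x y = qpolar Q y x := by
  rw [qpolar_eq, qpolar_eq, add_comm]

theorem qpolar_self [NeZero (2 : K)] (x : Fin m → K) : qpolar Q x x = qeval Q x := by
  rw [qpolar_eq, qeval, ← two_mul, mul_div_cancel_left₀ _ two_ne_zero]

theorem qpolar_add_smul_left (x y z : Fin m → K) (a : K) :
    qpolar Q (x + a • y) z = qpolar Q x z + a * qpolar Q y z := by
  simp only [qpolar_eq, mulVec_add, mulVec_smul, add_dotProduct, dotProduct_add, smul_dotProduct,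
    dotProduct_smul, smul_eq_mul]
  ring

end Polar

theorem exists_int_smul_eq_map_intCast {ι κ : Type*} [Finite ι] [Finite κ]
    (Q : Matrix ι κ ℚ) : ∃ b : ℤ, b ≠ 0 ∧ ∃ A : Matrix ι κ ℤ, (b : ℚ) • Q = A.map Int.cast := by
  obtain ⟨b, hb⟩ := IsLocalization.exist_integer_multiples_of_finite (nonZeroDivisors ℤ)
    (fun p : ι × κ => Q p.1 p.2)
  choose A hA using hb
  refine ⟨b, nonZeroDivisors.coe_ne_zero b, Matrix.of fun i j => A (i, j), ?_⟩
  ext i j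
  simpa [zsmul_eq_mul] using (hA (i, j)).symm

theorem exists_int_mul_qpolar_eq_intCast {m : ℕ} (Q : Matrix (Fin m) (Fin m) ℚ) :
    ∃ d : ℤ, d ≠ 0 ∧ ∀ u w : Fin m → ℤ,
      ∃ z : ℤ, d * qpolar Q (intVecCast u) (intVecCast w) = z := by
  obtain ⟨b, hb, A, hA⟩ := exists_int_smul_eq_map_intCast Q
  have hcast : ∀ u w : Fin m → ℤ,
      (b : ℚ) * (intVecCast u ⬝ᵥ Q *ᵥ intVecCast w) = ((u ⬝ᵥ A *ᵥ w : ℤ) : ℚ) := by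
    intro u w
    rw [← smul_eq_mul, ← dotProduct_smul, ← smul_mulVec, hA, ← eq_intCast (Int.castRingHom ℚ),
      RingHom.map_dotProduct]
    congr 1
    ext j
    exact (RingHom.map_mulVec (Int.castRingHom ℚ) A w j).symm
  refine ⟨2 * b, mul_ne_zero two_ne_zero hb, fun u w => ⟨u ⬝ᵥ A *ᵥ w + w ⬝ᵥ A *ᵥ u, ?_⟩⟩
  rw [qpolar_eq, Int.cast_add, ← hcast, ← hcast]
  push_cast
  ring

theorem dvd_mulVec_sub_self_of_dvd_sub_one {ι R : Type*} [Fintype ι] [DecidableEq ι]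
    [CommRing R] {N : R} {M : Matrix ι ι R} (hM : ∀ i j, N ∣ M i j - (1 : Matrix ι ι R) i j)
    (x : ι → R) (i : ι) : N ∣ (M *ᵥ x) i - x i := by
  have h : (M *ᵥ x) i - x i = ((M - 1) *ᵥ x) i := by rw [sub_mulVec, one_mulVec, Pi.sub_apply]
  rw [h]
  simp only [mulVec, dotProduct, Matrix.sub_apply]
  exact Finset.dvd_sum fun j _ => (hM i j).mul_right (x j)

theorem eq_of_dvd_sub_of_abs_add_abs_lt {ι : Type*} {N : ℤ} {u w : ι → ℤ}
    (hdvd : ∀ j, N ∣ u j - w j) (hlt : ∀ j, |u j| + |w j| < N) : u = w := by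
  funext j
  have := Int.eq_zero_of_abs_lt_dvd (hdvd j) ((abs_sub _ _).trans_lt (hlt j))
  omega

theorem exists_int_mul_qpolar_sub_eq_mul {m : ℕ} {Q : Matrix (Fin m) (Fin m) ℚ} {d N : ℤ}
    (hd : ∀ u w : Fin m → ℤ, ∃ z : ℤ, d * qpolar Q (intVecCast u) (intVecCast w) = z)
    {u v : Fin m → ℤ} (hdvd : ∀ j, N ∣ v j - u j) (w : Fin m → ℤ) :
    ∃ s : ℤ, d * (qpolar Q (intVecCast v) (intVecCast w) -
      qpolar Q (intVecCast u) (intVecCast w)) = N * s := by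
  choose t ht using hdvd
  obtain ⟨z, hz⟩ := hd t w
  have hv : intVecCast v = intVecCast u + (N : ℚ) • intVecCast t := by
    funext j
    simp only [intVecCast, Pi.add_apply, Pi.smul_apply, smul_eq_mul]
    exact_mod_cast (eq_add_of_sub_eq' (ht j))
  refine ⟨z, ?_⟩
  rw [hv, qpolar_add_smul_left, ← hz]
  ring

theorem sq_le_sq_of_mul_sub_eq_intCast_mul {K : Type*} [Field K] [LinearOrder K]
    [IsStrictOrderedRing K] {b c d : K} {N s : ℤ} (hd : d ≠ 0) (h : d * (b - c) = N * s)
    (hN : 2 * |d| * |c| < N) : c ^ 2 ≤ b ^ 2 := by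
  by_contra! hlt
  have hbc : |b| < |c| := sq_lt_sq.mp hlt
  have hs : s ≠ 0 := by
    rintro rfl
    have : b = c := by simpa [hd, sub_eq_zero] using h
    simp [this] at hlt
  have hsmall : |(N * s : ℤ)| < N := by
    have : |d * (b - c)| < N := calc
      |d * (b - c)| ≤ |d| * (|b| + |c|) := by
        rw [abs_mul]; exact mul_le_mul_of_nonneg_left (abs_sub _ _) (abs_nonneg d)
      _ < 2 * |d| * |c| := by nlinarith [abs_pos.mpr hd]
      _ < N := hN
    exact_mod_cast h ▸ this
  have hN0 : 0 < N := by exact_mod_cast (by positivity : (0 : K) ≤ 2 * |d| * |c|).trans_lt hN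
  rw [abs_mul, abs_of_pos hN0] at hsmall
  nlinarith [Int.one_le_abs hs]

theorem congruence_hyperplane_separation_general (n k : ℕ)
    (Q : Matrix (Fin (n + 1)) (Fin (n + 1)) ℚ)
    (e : Fin (k + 1) → Fin (n + 1) → ℤ)
    (hsep : ∀ i : Fin (k + 1), i ≠ 0 →
      qeval Q (intVecCast (e i)) * qeval Q (intVecCast (e 0)) ≤
        (qpolar Q (intVecCast (e i)) (intVecCast (e 0))) ^ 2) :
    ∃ N : ℕ, 1 ≤ N ∧ ∀ γ : GL (Fin (n + 1)) ℤ, γ ∈ OZ Q →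
      (∀ i j, (N : ℤ) ∣ ((γ : Matrix (Fin (n + 1)) (Fin (n + 1)) ℤ) i j -
        (1 : Matrix (Fin (n + 1)) (Fin (n + 1)) ℤ) i j)) →
      (((γ : Matrix (Fin (n + 1)) (Fin (n + 1)) ℤ) *ᵥ e 0 = e 0) ∨
        ((γ : Matrix (Fin (n + 1)) (Fin (n + 1)) ℤ) *ᵥ e 0 = - e 0)) ∨
      (∀ i : Fin (k + 1),
        ((γ : Matrix (Fin (n + 1)) (Fin (n + 1)) ℤ) *ᵥ e 0 ≠ e i ∧
          (γ : Matrix (Fin (n + 1)) (Fin (n + 1)) ℤ) *ᵥ e 0 ≠ - e i) ∧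
        qeval Q (intVecCast (e 0)) * qeval Q (intVecCast (e i)) ≤
          (qpolar Q (intVecCast ((γ : Matrix (Fin (n + 1)) (Fin (n + 1)) ℤ) *ᵥ e 0))
            (intVecCast (e i))) ^ 2) := by
  obtain ⟨d, hd, hdB⟩ := exists_int_mul_qpolar_eq_intCast Q
  set c := fun i => qpolar Q (intVecCast (e 0)) (intVecCast (e i))
  have hsep₀ : ∀ i, qeval Q (intVecCast (e 0)) * qeval Q (intVecCast (e i)) ≤ c i ^ 2 := by
    intro i
    rcases eq_or_ne i 0 with rfl | hi
    · simp only [c, qpolar_self, sq, le_refl]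
    · simpa only [c, mul_comm, qpolar_comm] using hsep i hi
  have hlarge : ∀ᶠ N : ℕ in Filter.atTop, 1 ≤ N ∧ (∀ i j, |e i j| + |e 0 j| < N) ∧
      ∀ i, 2 * |(d : ℚ)| * |c i| < N :=
    (Filter.eventually_ge_atTop 1).and <|
      (Filter.eventually_all.2 fun i => Filter.eventually_all.2 fun j =>
        tendsto_natCast_atTop_atTop.eventually_gt_atTop _).and <|
      Filter.eventually_all.2 fun i => tendsto_natCast_atTop_atTop.eventually_gt_atTop _
  obtain ⟨N, hN1, hNe, hNc⟩ := hlarge.exists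
  refine ⟨N, hN1, fun γ _ hγ => ?_⟩
  have hcong := dvd_mulVec_sub_self_of_dvd_sub_one hγ (e 0)
  by_cases hfix : (γ : Matrix _ _ ℤ) *ᵥ e 0 = e 0 ∨ (γ : Matrix _ _ ℤ) *ᵥ e 0 = -e 0
  · exact Or.inl hfix
  refine Or.inr fun i => ⟨⟨fun h => hfix (Or.inl ?_), fun h => hfix (Or.inl ?_)⟩, ?_⟩
  · rw [h] at hcong ⊢
    exact eq_of_dvd_sub_of_abs_add_abs_lt hcong (hNe i)
  · rw [h] at hcong ⊢
    exact eq_of_dvd_sub_of_abs_add_abs_lt hcong (by simpa using hNe i)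
  · obtain ⟨s, hs⟩ := exists_int_mul_qpolar_sub_eq_mul hdB hcong (e i)
    exact (hsep₀ i).trans (sq_le_sq_of_mul_sub_eq_intCast_mul (Int.cast_ne_zero.2 hd) hs (hNc i))

/-- hyperplane separability via congruence subgroups. -/
theorem congruence_hyperplane_separation (n k : ℕ)
    (Q : Matrix (Fin (n + 1)) (Fin (n + 1)) ℚ) (hQsymm : Q.IsSymm)
    (hsig : HasSignature Q n 1)
    (e : Fin (k + 1) → Fin (n + 1) → ℤ)
    (hprim : ∀ i, IsPrimitiveVec (e i))
    (hpos : ∀ i, 0 < qeval Q (intVecCast (e i)))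
    (hsep : ∀ i : Fin (k + 1), i ≠ 0 →
      qeval Q (intVecCast (e i)) * qeval Q (intVecCast (e 0)) ≤
        (qpolar Q (intVecCast (e i)) (intVecCast (e 0))) ^ 2) :
    ∃ N : ℕ, 1 ≤ N ∧ ∀ γ : GL (Fin (n + 1)) ℤ, γ ∈ OZ Q →
      (∀ i j, (N : ℤ) ∣ ((γ : Matrix (Fin (n + 1)) (Fin (n + 1)) ℤ) i j -
        (1 : Matrix (Fin (n + 1)) (Fin (n + 1)) ℤ) i j)) →
      (((γ : Matrix (Fin (n + 1)) (Fin (n + 1)) ℤ) *ᵥ e 0 = e 0) ∨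
        ((γ : Matrix (Fin (n + 1)) (Fin (n + 1)) ℤ) *ᵥ e 0 = - e 0)) ∨
      (∀ i : Fin (k + 1),
        ((γ : Matrix (Fin (n + 1)) (Fin (n + 1)) ℤ) *ᵥ e 0 ≠ e i ∧
          (γ : Matrix (Fin (n + 1)) (Fin (n + 1)) ℤ) *ᵥ e 0 ≠ - e i) ∧
        qeval Q (intVecCast (e 0)) * qeval Q (intVecCast (e i)) ≤
          (qpolar Q (intVecCast ((γ : Matrix (Fin (n + 1)) (Fin (n + 1)) ℤ) *ᵥ e 0))
            (intVecCast (e i))) ^ 2) :=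
  congruence_hyperplane_separation_general n k Q e hsep

end Paper
end

section
/- Let f be a quadratic form on ℝ^{n+1} of signature (n,1) with polar bilinear form B(x,y) = (f(x+y) − f(x) − f(y))/2, and let e, e' ∈ ℝ^{n+1} be linearly independent vectors with f(e) > 0 and f(e') > 0. Then there exists a vector v ∈ ℝ^{n+1} with B(v,e) = 0, B(v,e') = 0 and f(v) < 0 if and only if B(e,e')^2 < f(e)·f(e'). -/
namespace Paper

open Matrix

/-!
Write `B` for the polar form of `f`. In coordinates where `f(x) = ‖x_s‖² - x_t²`, the
Cauchy–Schwarz inequality shows that `f` is positive definite on the `B`-orthogonal complement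
of any vector `v` with `f(v) < 0`. If such a `v` is orthogonal to `e` and `e'`, it is orthogonal
to `w = -B(e,e') e + f(e) e' ≠ 0`, and `f(e) f(w) = f(e)² (f(e) f(e') - B(e,e')²)` is positive.
Conversely, when this Gram determinant is positive, `f` is positive semidefinite on the plane
spanned by `e` and `e'`, so the component orthogonal to that plane of any vector `u` with
`f(u) < 0` is still negative.
-/

section MatrixForm

variable {m : ℕ}

theorem qeval_eq_toQuadraticForm' {R : Type*} [CommRing R] (Q : Matrix (Fin m) (Fin m) R)
    (x : Fin m → R) : qeval Q x = Q.toQuadraticForm' x := by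
  simp [qeval, Matrix.toQuadraticForm', Matrix.toLinearMap₂'_apply']

theorem qpolar_eq_associated {K : Type*} [Field K] [Invertible (2 : K)]
    (Q : Matrix (Fin m) (Fin m) K) (x y : Fin m → K) :
    qpolar Q x y = Q.toQuadraticForm'.associated x y := by
  rw [QuadraticMap.associated_apply]
  simp [qpolar, qeval_eq_toQuadraticForm', div_eq_inv_mul]

end MatrixForm

theorem exists_mul_add_mul_eq_of_det_ne_zero {K : Type*} [Field K] {a b c d r s : K}
    (h : a * d - b * c ≠ 0) : ∃ α β, α * a + β * b = r ∧ α * c + β * d = s :=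
  ⟨(r * d - b * s) / (a * d - b * c), (a * s - r * c) / (a * d - b * c),
    by rw [div_mul_eq_mul_div, div_mul_eq_mul_div, ← add_div, div_eq_iff h]; ring,
    by rw [div_mul_eq_mul_div, div_mul_eq_mul_div, ← add_div, div_eq_iff h]; ring⟩

section RealQuadraticForm

variable {V : Type*} [AddCommGroup V] [Module ℝ V] (q : QuadraticForm ℝ V)

theorem map_smul_add_smul (a b : ℝ) (x y : V) :
    q (a • x + b • y) = a ^ 2 * q x + 2 * a * b * q.associated x y + b ^ 2 * q y := by
  simp only [← QuadraticMap.associated_eq_self_apply ℝ q, map_add, map_smul, LinearMap.add_apply,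
    LinearMap.smul_apply, smul_eq_mul, QuadraticMap.associated_isSymm ℝ q y x]
  ring

theorem mul_map_smul_add_smul (a b : ℝ) (x y : V) :
    q x * q (a • x + b • y) =
      (a * q x + b * q.associated x y) ^ 2 + b ^ 2 * (q x * q y - q.associated x y ^ 2) := by
  rw [map_smul_add_smul]
  ring

theorem map_smul_add_smul_nonneg {x y : V} (hx : 0 < q x)
    (hxy : q.associated x y ^ 2 < q x * q y) (a b : ℝ) : 0 ≤ q (a • x + b • y) := by
  rw [← mul_nonneg_iff_of_pos_left hx, mul_map_smul_add_smul]
  have : 0 ≤ q x * q y - q.associated x y ^ 2 := by linarith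
  positivity

theorem exists_neg_orthogonal_of_sq_associated_lt {u x y : V} (hu : q u < 0) (hx : 0 < q x)
    (hxy : q.associated x y ^ 2 < q x * q y) :
    ∃ v, q.associated v x = 0 ∧ q.associated v y = 0 ∧ q v < 0 := by
  set B := q.associated
  obtain ⟨α, β, hαβx, hαβy⟩ :
      ∃ α β : ℝ, α * q x + β * B x y = B u x ∧ α * B x y + β * q y = B u y :=
    exists_mul_add_mul_eq_of_det_ne_zero (by linarith)
  have hBxx : B x x = q x := QuadraticMap.associated_eq_self_apply ℝ q x
  have hByy : B y y = q y := QuadraticMap.associated_eq_self_apply ℝ q y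
  have hByx : B y x = B x y := QuadraticMap.associated_isSymm ℝ q y x
  set p := α • x + β • y
  have hpx : B p x = B u x := by
    simp only [p, map_add, map_smul, LinearMap.add_apply, LinearMap.smul_apply, smul_eq_mul,
      hBxx, hByx, hαβx]
  have hpy : B p y = B u y := by
    simp only [p, map_add, map_smul, LinearMap.add_apply, LinearMap.smul_apply, smul_eq_mul,
      hByy, hαβy]
  have hvx : B (u - p) x = 0 := by rw [map_sub, LinearMap.sub_apply, hpx, sub_self]
  have hvy : B (u - p) y = 0 := by rw [map_sub, LinearMap.sub_apply, hpy, sub_self]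
  have hvp : B (u - p) p = 0 := by
    change B (u - p) (α • x + β • y) = 0
    rw [map_add, map_smul, map_smul, hvx, hvy, smul_zero, smul_zero, add_zero]
  have hu' : q u = q (u - p) + q p := by
    rw [← QuadraticMap.isOrtho_def.mp (QuadraticMap.associated_isOrtho.mp hvp), sub_add_cancel]
  exact ⟨u - p, hvx, hvy, by linarith [map_smul_add_smul_nonneg q hx hxy α β]⟩

theorem sq_associated_lt_of_neg_orthogonal {v x y : V}
    (hv : ∀ w, w ≠ 0 → q.associated v w = 0 → 0 < q w) (hvx : q.associated v x = 0)
    (hvy : q.associated v y = 0) (hxy : LinearIndependent ℝ ![x, y]) (hx : 0 < q x) :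
    q.associated x y ^ 2 < q x * q y := by
  set w := (-q.associated x y) • x + q x • y
  have hw : w ≠ 0 := fun h => hx.ne' (LinearIndependent.pair_iff.mp hxy _ _ h).2
  have hvw : q.associated v w = 0 := by simp [w, hvx, hvy]
  have hxw : 0 < q x * q w := mul_pos hx (hv w hw hvw)
  rw [mul_map_smul_add_smul] at hxw
  nlinarith

end RealQuadraticForm

/-- In the Minkowski space `E × ℝ` with form `‖s‖² - α²`, a nonzero vector orthogonal to a
timelike vector is spacelike. -/
theorem sq_lt_norm_sq_of_inner_eq_mul {E : Type*} [NormedAddCommGroup E] [InnerProductSpace ℝ E]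
    {s t : E} {α β : ℝ} (hs : ‖s‖ ^ 2 < α ^ 2) (hst : inner ℝ s t = α * β)
    (ht : t ≠ 0 ∨ β ≠ 0) : β ^ 2 < ‖t‖ ^ 2 := by
  rcases eq_or_ne β 0 with rfl | hβ
  · simpa [sq_pos_iff] using ht
  by_contra! htβ
  have := calc α ^ 2 * β ^ 2 = inner ℝ s t * inner ℝ s t := by rw [hst]; ring
    _ ≤ inner ℝ s s * inner ℝ t t := real_inner_mul_inner_self_le s t
    _ = ‖s‖ ^ 2 * ‖t‖ ^ 2 := by rw [real_inner_self_eq_norm_sq, real_inner_self_eq_norm_sq]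
    _ ≤ ‖s‖ ^ 2 * β ^ 2 := by gcongr
    _ < α ^ 2 * β ^ 2 := by gcongr
  exact this.false

def spatialPart {n : ℕ} (x : Fin (n + 1) → ℝ) : EuclideanSpace ℝ (Fin n) :=
  WithLp.toLp 2 (Fin.init x)

theorem spatialPart_add {n : ℕ} (x y : Fin (n + 1) → ℝ) :
    spatialPart (x + y) = spatialPart x + spatialPart y := rfl

theorem sum_ite_sq_eq_norm_spatialPart_sq_sub {n : ℕ} (x : Fin (n + 1) → ℝ) :
    ∑ i : Fin (n + 1), (if (i : ℕ) < n then x i ^ 2 else -x i ^ 2) =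
      ‖spatialPart x‖ ^ 2 - x (Fin.last n) ^ 2 := by
  simp [Fin.sum_univ_castSucc, EuclideanSpace.real_norm_sq_eq, spatialPart, Fin.init,
    sub_eq_add_neg]

namespace RealSignature

theorem exists_qeval_neg {m r s : ℕ} {Q : Matrix (Fin m) (Fin m) ℝ} (h : RealSignature Q r s)
    (hs : 0 < s) : ∃ u, qeval Q u < 0 := by
  obtain ⟨hrs, T, -, hT⟩ := h
  let i : Fin m := ⟨r, by omega⟩
  refine ⟨T *ᵥ Pi.single i 1, ?_⟩
  rw [hT, Finset.sum_eq_single i (fun j _ hj => by simp [hj]) (by simp)]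
  simp [i]

theorem pos_of_qpolar_eq_zero {n : ℕ} {Q : Matrix (Fin (n + 1)) (Fin (n + 1)) ℝ}
    (h : RealSignature Q n 1) {v w : Fin (n + 1) → ℝ} (hv : qeval Q v < 0) (hw : w ≠ 0)
    (hvw : qpolar Q v w = 0) : 0 < qeval Q w := by
  obtain ⟨-, T, hTdet, hT⟩ := h
  simp only [sum_ite_sq_eq_norm_spatialPart_sq_sub] at hT
  have hTsurj : Function.Surjective T.mulVec := Matrix.mulVec_surjective_iff_isUnit.mpr
    ((Matrix.isUnit_iff_isUnit_det T).mpr hTdet.isUnit)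
  obtain ⟨a, rfl⟩ := hTsurj v
  obtain ⟨b, rfl⟩ := hTsurj w
  have hb : spatialPart b ≠ 0 ∨ b (Fin.last n) ≠ 0 := by
    by_contra! hb
    have hinit : Fin.init b = 0 := congrArg WithLp.ofLp hb.1
    have hb0 : b = 0 := funext fun i => Fin.lastCases hb.2 (congrFun hinit) i
    exact hw (by rw [hb0, Matrix.mulVec_zero])
  rw [qpolar, ← Matrix.mulVec_add, hT, hT, hT, spatialPart_add, norm_add_sq_real] at hvw
  rw [hT] at hv ⊢
  have hab : inner ℝ (spatialPart a) (spatialPart b) = a (Fin.last n) * b (Fin.last n) := by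
    simp only [Pi.add_apply] at hvw
    linarith
  have := sq_lt_norm_sq_of_inner_eq_mul (lt_of_sub_neg hv) hab hb
  linarith

end RealSignature

theorem common_negative_orthogonal_iff_general (n : ℕ)
    (Q : Matrix (Fin (n + 1)) (Fin (n + 1)) ℝ)
    (hsig : RealSignature Q n 1) (e e' : Fin (n + 1) → ℝ)
    (hli : LinearIndependent ℝ ![e, e'])
    (he : 0 < qeval Q e) :
    (∃ v : Fin (n + 1) → ℝ, qpolar Q v e = 0 ∧ qpolar Q v e' = 0 ∧ qeval Q v < 0) ↔
      (qpolar Q e e') ^ 2 < qeval Q e * qeval Q e' := by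
  have hneg := hsig.exists_qeval_neg one_pos
  have hpos := @hsig.pos_of_qpolar_eq_zero
  simp only [qeval_eq_toQuadraticForm', qpolar_eq_associated] at hneg hpos he ⊢
  constructor
  · rintro ⟨v, hve, hve', hv⟩
    exact sq_associated_lt_of_neg_orthogonal _ (fun w hw hvw => hpos hv hw hvw) hve hve' hli he
  · obtain ⟨u, hu⟩ := hneg
    exact exists_neg_orthogonal_of_sq_associated_lt _ hu he

/-- For a real quadratic form of signature `(n,1)` and linearly independent
spacelike vectors `e, e'`, there is a common orthogonal negative vector iff
`B(e,e')² < f(e)·f(e')`. -/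
theorem common_negative_orthogonal_iff (n : ℕ)
    (Q : Matrix (Fin (n + 1)) (Fin (n + 1)) ℝ) (hQsymm : Q.IsSymm)
    (hsig : RealSignature Q n 1) (e e' : Fin (n + 1) → ℝ)
    (hli : LinearIndependent ℝ ![e, e'])
    (he : 0 < qeval Q e) (he' : 0 < qeval Q e') :
    (∃ v : Fin (n + 1) → ℝ, qpolar Q v e = 0 ∧ qpolar Q v e' = 0 ∧ qeval Q v < 0) ↔
      (qpolar Q e e') ^ 2 < qeval Q e * qeval Q e' :=
  common_negative_orthogonal_iff_general n Q hsig e e' hli he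

end Paper
end

section
/- Let f and g be nonsingular quadratic forms with rational coefficients such that f represents g. Then there exist a finite-index subgroup H of O(g,ℤ) and an injective group homomorphism from H into O(f,ℤ). -/
/-! If `u (x ⊕ y)` turns `f` into `g(x) + h(y)`, then `A ↦ u (A ⊕ 1) u⁻¹` embeds `O(g, ℚ)` into
`O(f, ℚ)`. This conjugate need not be integral, but if `D` clears the denominators of `u` and
`u⁻¹` and `A = 1 + D² Y` is integral, then `u (A ⊕ 1) u⁻¹ = 1 + (D u)(Y ⊕ 0)(D u⁻¹)` is integral
too. So the principal congruence subgroup of level `D²`, which has finite index, embeds into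
`O(f, ℤ)`. -/

namespace Paper

open Matrix

section BlockOne

variable {ι κ ν R S : Type*} [Fintype ι] [Fintype κ] [Fintype ν]
  [DecidableEq ι] [DecidableEq κ] [DecidableEq ν] [CommRing R] [CommRing S]

def blockOne (e : ν ≃ ι ⊕ κ) : Matrix ι ι R →* Matrix ν ν R where
  toFun A := (fromBlocks A 0 0 1).submatrix e e
  map_one' := by rw [fromBlocks_one, submatrix_one_equiv]
  map_mul' A B := by rw [submatrix_mul_equiv, fromBlocks_multiply]; simp

lemma blockOne_injective (e : ν ≃ ι ⊕ κ) : Function.Injective (blockOne (R := R) e) := by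
  intro A B h
  have h' := congrArg (fun X => X.submatrix e.symm e.symm) h
  simpa [blockOne, submatrix_submatrix, fromBlocks_inj] using h'

lemma blockOne_map (e : ν ≃ ι ⊕ κ) (f : R →+* S) (A : Matrix ι ι R) :
    (blockOne e A).map f = blockOne e (A.map f) := by
  change ((fromBlocks A 0 0 1).map f).submatrix e e = _
  simp only [fromBlocks_map, Matrix.map_zero _ f.map_zero, Matrix.map_one _ f.map_zero f.map_one]
  rfl

lemma blockOne_mulVec (e : ν ≃ ι ⊕ κ) (A : Matrix ι ι R) (x : ι → R) (y : κ → R) :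
    blockOne e A *ᵥ (Sum.elim x y ∘ e) = Sum.elim (A *ᵥ x) y ∘ e := by
  simp [blockOne, submatrix_mulVec_equiv, Function.comp_assoc, fromBlocks_mulVec]

def blockOneGL (e : ν ≃ ι ⊕ κ) : GL ι R →* GL ν R := Units.map (blockOne e)

lemma blockOneGL_injective (e : ν ≃ ι ⊕ κ) : Function.Injective (blockOneGL (R := R) e) :=
  fun _ _ h => Units.ext (blockOne_injective e (congrArg Units.val h))

lemma map_blockOneGL (e : ν ≃ ι ⊕ κ) (f : R →+* S) (A : GL ι R) :
    GeneralLinearGroup.map f (blockOneGL e A) = blockOneGL e (GeneralLinearGroup.map f A) :=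
  Units.ext (blockOne_map e f A)

end BlockOne

section Congruence

variable {ι ν : Type*} [Fintype ι] [Fintype ν] [DecidableEq ι] [DecidableEq ν]

def congruenceSubgroup (ν : Type*) [Fintype ν] [DecidableEq ν] (N : ℕ) : Subgroup (GL ν ℤ) :=
  (GeneralLinearGroup.map (Int.castRingHom (ZMod N))).ker

instance (N : ℕ) [NeZero N] : (congruenceSubgroup ν N).FiniteIndex :=
  Subgroup.finiteIndex_ker _

lemma exists_eq_one_add_smul_of_mem_congruenceSubgroup {N : ℕ} {A : GL ν ℤ}
    (hA : A ∈ congruenceSubgroup ν N) :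
    ∃ Y : Matrix ν ν ℤ, (A : Matrix ν ν ℤ) = 1 + (N : ℤ) • Y := by
  have hdvd : ∀ i j, (N : ℤ) ∣ (A - 1 : Matrix ν ν ℤ) i j := fun i j => by
    rw [← ZMod.intCast_zmod_eq_zero_iff_dvd]
    have := congrArg (fun g : GL ν (ZMod N) => (g : Matrix ν ν (ZMod N)) i j) hA
    simpa [Matrix.one_apply, apply_ite (Int.cast : ℤ → ZMod N), sub_eq_zero] using this
  refine ⟨(A - 1 : Matrix ν ν ℤ).map (· / (N : ℤ)), ?_⟩
  ext i j
  rw [Matrix.add_apply, Matrix.smul_apply, map_apply, smul_eq_mul,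
    Int.mul_ediv_cancel' (hdvd i j), Matrix.sub_apply, add_sub_cancel]

lemma blockOneGL_mem_congruenceSubgroup {κ : Type*} [Fintype κ] [DecidableEq κ]
    (e : ν ≃ ι ⊕ κ) {N : ℕ} {A : GL ι ℤ} (hA : A ∈ congruenceSubgroup ι N) :
    blockOneGL e A ∈ congruenceSubgroup ν N := by
  rw [congruenceSubgroup, MonoidHom.mem_ker] at hA ⊢
  rw [map_blockOneGL, hA, map_one]

end Congruence

section Integrality

lemma exists_smul_eq_map_intCast {κ μ ν : Type*} [Finite κ] [Finite μ] [Finite ν]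
    (M : κ → Matrix μ ν ℚ) :
    ∃ D : ℤ, D ≠ 0 ∧ ∀ k, ∃ P : Matrix μ ν ℤ, P.map (↑) = (D : ℚ) • M k := by
  obtain ⟨⟨D, hD⟩, h⟩ := IsLocalization.exist_integer_multiples_of_finite (nonZeroDivisors ℤ)
    fun p : κ × μ × ν => M p.1 p.2.1 p.2.2
  choose P hP using h
  refine ⟨D, nonZeroDivisors.ne_zero hD, fun k => ⟨Matrix.of fun i j => P (k, i, j), ?_⟩⟩
  ext i j
  simpa [Algebra.smul_def] using hP (k, i, j)

variable {ν : Type*} [Fintype ν] [DecidableEq ν]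

lemma map_intCast_injective :
    Function.Injective (GeneralLinearGroup.map (n := ν) (Int.castRingHom ℚ)) :=
  fun _ _ h => Units.ext (Matrix.map_injective Int.cast_injective (congrArg Units.val h))

lemma mem_range_map_intCast {g : GL ν ℚ} {X Y : Matrix ν ν ℤ}
    (hX : (g : Matrix ν ν ℚ) = X.map (↑)) (hY : ((g⁻¹ : GL ν ℚ) : Matrix ν ν ℚ) = Y.map (↑)) :
    g ∈ (GeneralLinearGroup.map (n := ν) (Int.castRingHom ℚ)).range := by
  have cast_mul (A B : Matrix ν ν ℤ) : (A * B).map ((↑) : ℤ → ℚ) = A.map (↑) * B.map (↑) :=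
    Matrix.map_mul (f := Int.castRingHom ℚ)
  have cast_inj : Function.Injective (Matrix.map · ((↑) : ℤ → ℚ) : Matrix ν ν ℤ → _) :=
    Matrix.map_injective Int.cast_injective
  have hXY : X * Y = 1 := cast_inj <| by
    simp only [cast_mul, ← hX, ← hY, Units.mul_inv, Matrix.map_one _ Int.cast_zero Int.cast_one]
  have hYX : Y * X = 1 := cast_inj <| by
    simp only [cast_mul, ← hX, ← hY, Units.inv_mul, Matrix.map_one _ Int.cast_zero Int.cast_one]
  exact ⟨⟨X, Y, hXY, hYX⟩, Units.ext hX.symm⟩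

lemma conj_map_one_add_smul (u : GL ν ℚ) {D : ℤ} {P Q : Matrix ν ν ℤ}
    (hP : P.map (↑) = (D : ℚ) • (u : Matrix ν ν ℚ))
    (hQ : Q.map (↑) = (D : ℚ) • ((u⁻¹ : GL ν ℚ) : Matrix ν ν ℚ)) (Y : Matrix ν ν ℤ) :
    (u : Matrix ν ν ℚ) * (1 + D ^ 2 • Y).map (↑) * ((u⁻¹ : GL ν ℚ) : Matrix ν ν ℚ)
      = (1 + P * Y * Q).map (↑) := by
  change (u : Matrix ν ν ℚ) * (Int.castRingHom ℚ).mapMatrix (1 + D ^ 2 • Y) * _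
    = (Int.castRingHom ℚ).mapMatrix (1 + P * Y * Q)
  simp only [map_add, map_mul, map_one, map_zsmul, RingHom.mapMatrix_apply, Int.coe_castRingHom,
    hP, hQ]
  rw [← Int.cast_smul_eq_zsmul ℚ]
  simp only [Matrix.mul_add, Matrix.add_mul, Matrix.mul_one, Units.mul_inv, Matrix.mul_smul,
    Matrix.smul_mul, smul_smul, Matrix.mul_assoc]
  push_cast
  ring_nf

lemma exists_conj_map_intCast_mem_range (u : GL ν ℚ) :
    ∃ N : ℕ, N ≠ 0 ∧ ∀ A ∈ congruenceSubgroup ν N,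
      MulAut.conj u (GeneralLinearGroup.map (Int.castRingHom ℚ) A)
        ∈ (GeneralLinearGroup.map (n := ν) (Int.castRingHom ℚ)).range := by
  obtain ⟨D, hD, hPQ⟩ :=
    exists_smul_eq_map_intCast ![(u : Matrix ν ν ℚ), ((u⁻¹ : GL ν ℚ) : Matrix ν ν ℚ)]
  obtain ⟨P, hP⟩ := hPQ 0
  obtain ⟨Q, hQ⟩ := hPQ 1
  have hN : ((D ^ 2).natAbs : ℤ) = D ^ 2 := Int.natAbs_of_nonneg (sq_nonneg D)
  have hval : ∀ A ∈ congruenceSubgroup ν (D ^ 2).natAbs, ∃ X : Matrix ν ν ℤ,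
      ((MulAut.conj u (GeneralLinearGroup.map (Int.castRingHom ℚ) A) : GL ν ℚ) : Matrix ν ν ℚ)
        = X.map (↑) := by
    intro A hA
    obtain ⟨Y, hY⟩ := exists_eq_one_add_smul_of_mem_congruenceSubgroup hA
    rw [hN] at hY
    exact ⟨1 + P * Y * Q, by rw [← conj_map_one_add_smul u hP hQ Y, ← hY]; rfl⟩
  refine ⟨(D ^ 2).natAbs, by simpa using hD, fun A hA => ?_⟩
  obtain ⟨X, hX⟩ := hval A hA
  obtain ⟨Y, hY⟩ := hval A⁻¹ (inv_mem hA)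
  exact mem_range_map_intCast hX (by rwa [← map_inv, ← map_inv])

end Integrality

section Quadratic

variable {n k m : ℕ}

lemma mem_ortho_self_iff {K : Type*} [Field K] {Q : Matrix (Fin n) (Fin n) K} {M : GL (Fin n) K} :
    M ∈ ortho K Q ↔ ∀ x, qeval Q ((M : Matrix (Fin n) (Fin n) K) *ᵥ x) = qeval Q x :=
  Iff.rfl

lemma mem_OZ_iff {Q : Matrix (Fin n) (Fin n) ℚ} {A : GL (Fin n) ℤ} :
    A ∈ OZ Q ↔ GeneralLinearGroup.map (Int.castRingHom ℚ) A ∈ ortho ℚ Q := by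
  rw [mem_ortho_self_iff]
  rfl

lemma Represents.exists_equiv_sum {F : Matrix (Fin n) (Fin n) ℚ} {G : Matrix (Fin k) (Fin k) ℚ}
    (h : Represents F G) : ∃ (m : ℕ) (e : Fin n ≃ Fin k ⊕ Fin m) (H : Matrix (Fin m) (Fin m) ℚ)
      (u : GL (Fin n) ℚ), ∀ x y,
        qeval F ((u : Matrix (Fin n) (Fin n) ℚ) *ᵥ (Sum.elim x y ∘ e)) = qeval G x + qeval H y := by
  obtain ⟨m, hm, H, T, hT, hFG⟩ := h
  refine ⟨m, (finCongr hm).trans finSumFinEquiv.symm, H, .mkOfDetNeZero T hT, fun x y => ?_⟩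
  have happend : Sum.elim x y ∘ (finCongr hm).trans finSumFinEquiv.symm
      = Fin.append x y ∘ Fin.cast hm := by
    funext i
    change Sum.elim x y (finSumFinEquiv.symm (Fin.cast hm i)) = Fin.append x y (Fin.cast hm i)
    induction Fin.cast hm i using Fin.addCases <;> simp
  rw [happend]
  exact hFG x y

lemma conj_blockOneGL_mem_ortho {F : Matrix (Fin n) (Fin n) ℚ} {G : Matrix (Fin k) (Fin k) ℚ}
    {H : Matrix (Fin m) (Fin m) ℚ} (e : Fin n ≃ Fin k ⊕ Fin m) (u : GL (Fin n) ℚ)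
    (hFG : ∀ x y,
      qeval F ((u : Matrix (Fin n) (Fin n) ℚ) *ᵥ (Sum.elim x y ∘ e)) = qeval G x + qeval H y)
    {M : GL (Fin k) ℚ} (hM : M ∈ ortho ℚ G) :
    MulAut.conj u (blockOneGL e M) ∈ ortho ℚ F := by
  rw [mem_ortho_self_iff] at hM ⊢
  intro z
  set v := ((u⁻¹ : GL (Fin n) ℚ) : Matrix (Fin n) (Fin n) ℚ) *ᵥ z
  have hv : Sum.elim ((v ∘ e.symm) ∘ Sum.inl) ((v ∘ e.symm) ∘ Sum.inr) ∘ e = v := by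
    rw [Sum.elim_comp_inl_inr, Function.comp_assoc, e.symm_comp_self, Function.comp_id]
  have hz : (u : Matrix (Fin n) (Fin n) ℚ) *ᵥ v = z := by
    rw [mulVec_mulVec, Units.mul_inv, one_mulVec]
  have hMz : ((MulAut.conj u (blockOneGL e M) : GL (Fin n) ℚ) : Matrix (Fin n) (Fin n) ℚ) *ᵥ z
      = (u : Matrix (Fin n) (Fin n) ℚ) *ᵥ (blockOne e (M : Matrix (Fin k) (Fin k) ℚ) *ᵥ v) := by
    simp only [MulAut.conj_apply, Units.val_mul, ← mulVec_mulVec]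
    rfl
  rw [hMz, ← hv, blockOne_mulVec, hFG, hM, ← hFG, hv, hz]

end Quadratic

section Embedding

variable {G₁ G₂ G₃ : Type*} [Group G₁] [Group G₂] [Group G₃]

lemma MonoidHom.exists_comp_eq_of_forall_mem_range {ι : G₂ →* G₃} (hι : Function.Injective ι)
    (f : G₁ →* G₃) (hf : ∀ g, f g ∈ ι.range) : ∃ θ : G₁ →* G₂, ∀ g, ι (θ g) = f g :=
  ⟨(MonoidHom.ofInjective hι).symm.toMonoidHom.comp (f.codRestrict ι.range hf),
    fun _ => MonoidHom.apply_ofInjective_symm hι _⟩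

lemma exists_finiteIndex_embedding_of_injective {K₁ Γ : Subgroup G₁} {K₂ : Subgroup G₂}
    [Γ.FiniteIndex] (θ : Γ →* G₂) (hθ : Function.Injective θ)
    (hK : ∀ g : Γ, (g : G₁) ∈ K₁ → θ g ∈ K₂) :
    ∃ H : Subgroup K₁, H.FiniteIndex ∧ ∃ φ : H →* K₂, Function.Injective φ := by
  refine ⟨Γ.subgroupOf K₁, inferInstance,
    (θ.comp (K₁.subtype.subgroupComap Γ)).codRestrict K₂ fun g => hK _ g.1.2, fun g g' h => ?_⟩
  have hval : ((g : K₁) : G₁) = g' :=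
    congrArg (fun x : Γ => (x : G₁)) (hθ (congrArg Subtype.val h))
  exact Subtype.ext (Subtype.ext hval)

end Embedding

theorem finiteIndex_embedding_of_represents_general {nf ng : ℕ}
    (F : Matrix (Fin nf) (Fin nf) ℚ) (G : Matrix (Fin ng) (Fin ng) ℚ)
    (hrep : Represents F G) :
    ∃ H : Subgroup ↥(OZ G), H.FiniteIndex ∧
      ∃ φ : ↥H →* ↥(OZ F), Function.Injective φ := by
  obtain ⟨m, e, h, u, hFG⟩ := hrep.exists_equiv_sum
  obtain ⟨N, hN, hconj⟩ := exists_conj_map_intCast_mem_range u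
  have : NeZero N := ⟨hN⟩
  let Θ : congruenceSubgroup (Fin ng) N →* GL (Fin nf) ℚ :=
    (MulAut.conj u).toMonoidHom.comp <| (blockOneGL e).comp <|
      (GeneralLinearGroup.map (Int.castRingHom ℚ)).comp (congruenceSubgroup (Fin ng) N).subtype
  have hΘ : Function.Injective Θ :=
    (MulAut.conj u).injective.comp <| (blockOneGL_injective e).comp <|
      map_intCast_injective.comp Subtype.val_injective
  obtain ⟨θ, hθ⟩ := MonoidHom.exists_comp_eq_of_forall_mem_range map_intCast_injective Θ
    fun A => by
      simpa [Θ, map_blockOneGL] using hconj _ (blockOneGL_mem_congruenceSubgroup e A.2)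
  refine exists_finiteIndex_embedding_of_injective θ
    (fun A B h => hΘ (by rw [← hθ, ← hθ, h])) fun A hA => ?_
  rw [mem_OZ_iff] at hA ⊢
  rw [hθ]
  exact conj_blockOneGL_mem_ortho e u hFG hA

/-- If `f` represents `g` then a finite index subgroup of `O(g,ℤ)` embeds
into `O(f,ℤ)`. -/
theorem finiteIndex_embedding_of_represents {nf ng : ℕ}
    (F : Matrix (Fin nf) (Fin nf) ℚ) (G : Matrix (Fin ng) (Fin ng) ℚ)
    (hFsymm : F.IsSymm) (hGsymm : G.IsSymm)
    (hFns : F.det ≠ 0) (hGns : G.det ≠ 0)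
    (hrep : Represents F G) :
    ∃ H : Subgroup ↥(OZ G), H.FiniteIndex ∧
      ∃ φ : ↥H →* ↥(OZ F), Function.Injective φ :=
  finiteIndex_embedding_of_represents_general F G hrep

end Paper
end

section
/- Let A and B be finitely generated groups, let C be a group, and let C → A and C → B be injective group homomorphisms. If C is not finitely generated, then the amalgamated free product A *_C B (the pushout of the diagram A ← C → B in the category of groups) is finitely generated but not finitely presented. -/
namespace Paper

open Matrix

universe u

theorem isFinitelyPresented_iff {G : Type*} [Group G] :
    IsFinitelyPresented G ↔ Group.IsFinitelyPresented G := by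
  constructor
  · rintro ⟨n, rels, hrels, ⟨e⟩⟩
    have : Finite rels := hrels
    exact .equiv e
  · intro _
    obtain ⟨n, rels, hrels, ⟨e⟩⟩ :=
      Group.IsFinitelyPresented.exists_mulEquiv_presentedGroup (G := G)
    exact ⟨n, rels, hrels, ⟨e.symm⟩⟩

end Paper

/-!
Present `PushoutI φ` as the free product `∗ G i` modulo the normal closure of the relators
`φ i c * (φ j c)⁻¹`, `c ∈ C`. If it were finitely presented, the kernel of the surjection from the
finitely generated group `∗ G i` would be normally generated by finitely many elements, each a
consequence of finitely many relators; so the relators coming from some finitely generated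
`D < C` would already present it. But in the pushout over `D` the two images of `c ∉ D` differ,
since the images of two factors meet exactly in the image of the base.
-/

open Function Subgroup

theorem Subgroup.exists_finset_mem_normalClosure_biUnion {G α : Type*} [Group G]
    {R : α → Set G} {x : G} (hx : x ∈ normalClosure (⋃ a, R a)) :
    ∃ E : Finset α, x ∈ normalClosure (⋃ a ∈ E, R a) := by
  classical
  let K : Finset α → Subgroup G := fun E => normalClosure (⋃ a ∈ E, R a)
  have hK : Monotone K := fun E₁ E₂ h => normalClosure_mono (Set.biUnion_subset_biUnion_left h)
  have hR : normalClosure (⋃ a, R a) ≤ ⨆ E, K E := normalClosure_le_normal <|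
    Set.iUnion_subset fun a r hr => le_iSup K {a} (subset_normalClosure (by simpa using hr))
  exact (mem_iSup_of_directed hK.directed_le).mp (hR hx)

theorem Subgroup.IsFinitelyNormallyGenerated.exists_finset_le_normalClosure_biUnion
    {G α : Type*} [Group G] {N : Subgroup G} (hN : N.IsFinitelyNormallyGenerated)
    {R : α → Set G} (hNR : N ≤ normalClosure (⋃ a, R a)) :
    ∃ E : Finset α, N ≤ normalClosure (⋃ a ∈ E, R a) := by
  classical
  obtain ⟨T, hT, rfl⟩ := hN
  choose! E hE using fun t (ht : t ∈ T) =>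
    exists_finset_mem_normalClosure_biUnion (hNR (subset_normalClosure ht))
  refine ⟨hT.toFinset.biUnion E,
    normalClosure_le_normal fun t ht => normalClosure_mono ?_ (hE t ht)⟩
  exact Set.biUnion_subset_biUnion_left <| Finset.coe_subset.mpr <|
    Finset.subset_biUnion_of_mem E (hT.mem_toFinset.mpr ht)

/-- The kernel is normally generated by the relators of a finite presentation `φ`, transported
along a lift `h` of `φ` through `p`, together with one element `s⁻¹ * h (w (p s))` per generator `s`
of `Q`, where `w` is a section of `φ`. -/
theorem Group.IsFinitelyPresented.ker_isFinitelyNormallyGenerated {Q G : Type*} [Group Q]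
    [Group G] [Group.FG Q] [hG : Group.IsFinitelyPresented G] {p : Q →* G} (hp : Surjective p) :
    p.ker.IsFinitelyNormallyGenerated := by
  obtain ⟨n, φ, hφ, R, hR, hRφ⟩ := hG
  obtain ⟨S, hS, hSfin⟩ := Group.fg_iff.mp ‹Group.FG Q›
  let h : FreeGroup (Fin n) →* Q := FreeGroup.lift fun k => surjInv hp (φ (.of k))
  have hph : ∀ x, p (h x) = φ x := DFunLike.congr_fun <|
    show p.comp h = φ from FreeGroup.ext_hom _ _ fun k => by simp [h, surjInv_eq hp]
  let w := surjInv hφ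
  let T := h '' R ∪ (fun s => s⁻¹ * h (w (p s))) '' S
  refine ⟨T, (hR.image _).union (hSfin.image _), le_antisymm ?_ ?_⟩
  · refine normalClosure_le_normal ?_
    rintro _ (⟨r, hr, rfl⟩ | ⟨s, -, rfl⟩)
    · have hr' : r ∈ φ.ker := hRφ ▸ subset_normalClosure hr
      simpa [hph] using hr'
    · simp [hph, w, surjInv_eq hφ]
  · let M := normalClosure T
    have hRM : ∀ r ∈ R, h r ∈ M := fun r hr => subset_normalClosure (Or.inl ⟨r, hr, rfl⟩)
    have hker : φ.ker ≤ ((QuotientGroup.mk' M).comp h).ker :=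
      hRφ ▸ normalClosure_le_normal fun r hr => by simpa using hRM r hr
    let u : G →* Q ⧸ M := φ.liftOfRightInverse w (rightInverse_surjInv hφ) ⟨_, hker⟩
    have hu : u.comp p = QuotientGroup.mk' M := by
      refine MonoidHom.eq_of_eqOn_dense hS fun s hs => ?_
      have hs' : s⁻¹ * h (w (p s)) ∈ M := subset_normalClosure (Or.inr ⟨s, hs, rfl⟩)
      calc u (p s) = u (φ (w (p s))) := by rw [surjInv_eq hφ]
        _ = QuotientGroup.mk' M (h (w (p s))) := φ.liftOfRightInverse_comp_apply _ _ _ _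
        _ = QuotientGroup.mk' M s := ((QuotientGroup.eq).mpr hs').symm
    intro x hx
    change x ∈ M
    rw [← QuotientGroup.ker_mk' M, ← hu, MonoidHom.mem_ker, MonoidHom.comp_apply, hx, map_one]

instance Monoid.CoprodI.fg {ι : Type*} [Finite ι] {G : ι → Type*} [∀ i, Group (G i)]
    [∀ i, Group.FG (G i)] : Group.FG (Monoid.CoprodI G) := by
  have htop : (⊤ : Subgroup (Monoid.CoprodI G)) = ⨆ i, (Monoid.CoprodI.of : G i →* _).range := by
    rw [← Monoid.CoprodI.range_eq_iSup, Monoid.CoprodI.lift_of',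
      MonoidHom.range_eq_top.mpr surjective_id]
  exact Group.fg_def.mpr (htop ▸ Subgroup.FG.iSup _ fun i =>
    (Group.fg_iff_subgroup_fg _).mp (Group.fg_range _))

namespace Monoid.PushoutI

variable {ι : Type*} {G : ι → Type*} [∀ i, Group (G i)] {C : Type*} [Group C]
  (φ : ∀ i, C →* G i)

def amalgamRelators (c : C) : Set (CoprodI G) :=
  Set.range fun ij : ι × ι => CoprodI.of (φ ij.1 c) * (CoprodI.of (φ ij.2 c))⁻¹

theorem mem_of_relator_mem_ker_ofCoprodI (hφ : ∀ i, Injective (φ i)) {i j : ι} (hij : i ≠ j)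
    {D : Subgroup C} {c : C}
    (hc : CoprodI.of (φ i c) * (CoprodI.of (φ j c))⁻¹ ∈
      (ofCoprodI : CoprodI G →* PushoutI fun k => (φ k).comp D.subtype).ker) :
    c ∈ D := by
  have hφD : ∀ k, Injective ((φ k).comp D.subtype) := fun k => (hφ k).comp Subtype.val_injective
  have heq : (of i (φ i c) : PushoutI fun k => (φ k).comp D.subtype) = of j (φ j c) := by
    simpa [mul_inv_eq_one] using hc
  obtain ⟨d, hd⟩ : of i (φ i c) ∈ (base fun k => (φ k).comp D.subtype).range := by
    rw [← inf_of_range_eq_base_range hφD hij]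
    exact ⟨⟨_, rfl⟩, ⟨_, heq.symm⟩⟩
  rw [← of_apply_eq_base _ i] at hd
  have : (d : C) = c := hφ i (of_injective hφD i hd)
  exact this ▸ d.2

variable [Nonempty ι]

theorem ofCoprodI_surjective : Surjective (ofCoprodI : CoprodI G →* PushoutI φ) := by
  rw [← MonoidHom.range_eq_top, eq_top_iff]
  rintro x -
  induction x using induction_on with
  | of i g => exact ⟨CoprodI.of g, ofCoprodI_of i g⟩
  | base c =>
    obtain ⟨i⟩ := ‹Nonempty ι›
    exact ⟨CoprodI.of (φ i c), by rw [ofCoprodI_of, of_apply_eq_base]⟩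
  | mul x y hx hy => exact mul_mem hx hy

theorem ker_ofCoprodI :
    (ofCoprodI : CoprodI G →* PushoutI φ).ker = normalClosure (⋃ c, amalgamRelators φ c) := by
  refine le_antisymm ?_ (normalClosure_le_normal ?_)
  · let N := normalClosure (⋃ c, amalgamRelators φ c)
    let i₀ := Classical.arbitrary ι
    let σ : PushoutI φ →* CoprodI G ⧸ N :=
      lift (fun i => (QuotientGroup.mk' N).comp CoprodI.of)
        (((QuotientGroup.mk' N).comp CoprodI.of).comp (φ i₀)) fun i => by
          ext c
          exact QuotientGroup.eq_iff_div_mem.mpr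
            (subset_normalClosure <| Set.mem_iUnion_of_mem c ⟨(i, i₀), (div_eq_mul_inv _ _).symm⟩)
    have hσ : σ.comp ofCoprodI = QuotientGroup.mk' N :=
      CoprodI.ext_hom _ _ fun i => by ext; simp [σ]
    intro x hx
    change x ∈ N
    rw [← QuotientGroup.ker_mk' N, ← hσ, MonoidHom.mem_ker, MonoidHom.comp_apply, hx, map_one]
  · refine Set.iUnion_subset fun c => ?_
    rintro _ ⟨⟨i, j⟩, rfl⟩
    simp [of_apply_eq_base]

theorem ker_ofCoprodI_subgroup (D : Subgroup C) :
    (ofCoprodI : CoprodI G →* PushoutI fun i => (φ i).comp D.subtype).ker =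
      normalClosure (⋃ c ∈ D, amalgamRelators φ c) := by
  rw [ker_ofCoprodI]
  congr 1
  ext x
  simp [amalgamRelators]

end Monoid.PushoutI

namespace Paper

open Monoid.PushoutI

/-- B. H. Neumann. The amalgamated free product `A *_C B` of finitely
generated groups over an injectively embedded, non-finitely-generated subgroup `C` is
finitely generated but not finitely presented. -/
theorem amalgam_fg_not_fp {C : Type u} [Group C] {G : Fin 2 → Type u} [∀ i, Group (G i)]
    (φ : ∀ i, C →* G i) (hinj : ∀ i, Function.Injective (φ i))
    (hfg : ∀ i, Group.FG (G i)) (hC : ¬ Group.FG C) :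
    Group.FG (Monoid.PushoutI φ) ∧ ¬ IsFinitelyPresented (Monoid.PushoutI φ) := by
  have : ∀ i, Group.FG (G i) := hfg
  refine ⟨Group.fg_of_surjective (ofCoprodI_surjective φ), fun hFP => ?_⟩
  have := isFinitelyPresented_iff.mp hFP
  obtain ⟨E, hE⟩ := (Group.IsFinitelyPresented.ker_isFinitelyNormallyGenerated
    (ofCoprodI_surjective φ)).exists_finset_le_normalClosure_biUnion (ker_ofCoprodI φ).le
  obtain ⟨c, hc⟩ : ∃ c, c ∉ closure (E : Set C) := by
    by_contra! h
    exact hC ⟨⟨E, eq_top_iff.mpr fun c _ => h c⟩⟩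
  refine hc (mem_of_relator_mem_ker_ofCoprodI φ hinj zero_ne_one ?_)
  rw [ker_ofCoprodI_subgroup]
  refine normalClosure_mono (Set.biUnion_subset_biUnion_left Subgroup.subset_closure) (hE ?_)
  rw [ker_ofCoprodI]
  exact subset_normalClosure (Set.mem_iUnion_of_mem c ⟨(0, 1), rfl⟩)

end Paper
end
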